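/- arXiv:2204.08438 — 3 statements merged into one kernel-verified Lean document; each statement's English description precedes it below -/
import Mathlib

section
/- Let c ∈ ℂ with |c| > 1 and let ε > 0. Then there exists N ∈ ℕ such that for all n ≥ N, the filled Julia set of p_n(z) = z^n + c is contained in the annulus {z : 1 - ε ≤ |z| ≤ 1 + ε}. -/
/-- Filled Julia set: points with bounded forward orbit. -/
def filledJulia (f : ℂ → ℂ) : Set ℂ :=
  {z | Bornology.IsBounded (Set.range fun k : ℕ => f^[k] z)}

lemma step6 (c : ℂ) (m : ℕ) (δ : ℝ) (hδ : 0 < δ)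
    (hpow : 2 + ‖c‖ ≤ (1 + δ) ^ m) :
    ∀ w : ℂ, 1 + δ ≤ ‖w‖ → 2 * ‖w‖ ≤ ‖w ^ (m + 1) + c‖ := by
  intro w hw
  have h1 : (1 : ℝ) ≤ ‖w‖ := by linarith
  have h2 : (1 + δ) ^ m ≤ ‖w‖ ^ m := pow_le_pow_left₀ (by linarith) hw m
  have h5 : ‖w ^ (m + 1)‖ - ‖c‖ ≤ ‖w ^ (m + 1) + c‖ := by
    have h6 : ‖w ^ (m + 1)‖ ≤ ‖w ^ (m + 1) + c‖ + ‖c‖ := by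
      rw [show w ^ (m + 1) = (w ^ (m + 1) + c) + (-c) by ring]
      simpa using norm_add_le (w ^ (m + 1) + c) (-c)
    linarith
  rw [norm_pow, pow_succ] at h5
  nlinarith [norm_nonneg c]

lemma escape6 (c : ℂ) (m : ℕ) (δ : ℝ) (hδ : 0 < δ)
    (hpow : 2 + ‖c‖ ≤ (1 + δ) ^ m) :
    ∀ w : ℂ, 1 + δ ≤ ‖w‖ → w ∉ filledJulia (fun z => z ^ (m + 1) + c) := by
  intro w hw hbdd
  set f : ℂ → ℂ := fun z => z ^ (m + 1) + c with hf
  have key : ∀ k : ℕ, 2 ^ k * (1 + δ) ≤ ‖f^[k] w‖ := by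
    intro k
    induction k with
    | zero => simpa using hw
    | succ k ih =>
      have hk : (1 : ℝ) ≤ 2 ^ k := by exact_mod_cast Nat.one_le_two_pow
      have h1 : 1 + δ ≤ ‖f^[k] w‖ := by nlinarith
      have h2 := step6 c m δ hδ hpow (f^[k] w) h1
      rw [Function.iterate_succ_apply']
      have : ‖f (f^[k] w)‖ = ‖(f^[k] w) ^ (m + 1) + c‖ := rfl
      rw [this]
      calc 2 ^ (k + 1) * (1 + δ) = 2 * (2 ^ k * (1 + δ)) := by ring
      _ ≤ 2 * ‖f^[k] w‖ := by nlinarith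
      _ ≤ _ := h2
  have hbdd' : Bornology.IsBounded (Set.range fun k : ℕ => f^[k] w) := hbdd
  obtain ⟨C, hC⟩ := (isBounded_iff_forall_norm_le).mp hbdd'
  obtain ⟨k, hk⟩ := pow_unbounded_of_one_lt C (by norm_num : (1:ℝ) < 2)
  have := hC (f^[k] w) ⟨k, rfl⟩
  nlinarith [key k, pow_pos (by norm_num : (0:ℝ) < 2) k]

theorem statement6 (c : ℂ) (hc : 1 < ‖c‖) (ε : ℝ) (hε : 0 < ε) :
    ∃ N : ℕ, ∀ n ≥ N,
      filledJulia (fun z => z ^ n + c) ⊆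
        {z : ℂ | 1 - ε ≤ ‖z‖ ∧ ‖z‖ ≤ 1 + ε} := by
  set δ : ℝ := min ε ((‖c‖ - 1) / 2) with hδdef
  have hδ : 0 < δ := lt_min hε (by linarith)
  have hδε : δ ≤ ε := min_le_left _ _
  have hδc : δ ≤ (‖c‖ - 1) / 2 := min_le_right _ _
  obtain ⟨N₁, hN₁⟩ := pow_unbounded_of_one_lt (2 + ‖c‖) (by linarith : (1:ℝ) < 1 + δ)
  set t : ℝ := max (1 - ε) 0 with htdef
  have ht0 : 0 ≤ t := le_max_right _ _
  have ht1 : t < 1 := max_lt (by linarith) one_pos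
  obtain ⟨N₂, hN₂⟩ := exists_pow_lt_of_lt_one (by linarith : (0:ℝ) < (‖c‖ - 1) / 2) ht1
  refine ⟨max (N₁ + 1) N₂, fun n hn z hz => ?_⟩
  obtain ⟨m, rfl⟩ : ∃ m, n = m + 1 := by
    have : N₁ + 1 ≤ n := le_trans (le_max_left _ _) hn
    exact ⟨n - 1, by omega⟩
  have hmN : N₁ ≤ m := by
    have : N₁ + 1 ≤ m + 1 := le_trans (le_max_left _ _) hn
    omega
  have hpow : 2 + ‖c‖ ≤ (1 + δ) ^ m :=
    le_trans (le_of_lt hN₁) (pow_le_pow_right₀ (by linarith) hmN)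
  have hesc := escape6 c m δ hδ hpow
  constructor
  · -- lower bound
    by_contra h
    push_neg at h
    have hz0 : ‖z‖ ≤ t := le_trans (le_of_lt h) (le_max_left _ _)
    have hzn : ‖z‖ ^ (m + 1) ≤ t ^ (m + 1) := pow_le_pow_left₀ (norm_nonneg z) hz0 _
    have htn : t ^ (m + 1) ≤ t ^ N₂ := by
      apply pow_le_pow_of_le_one ht0 (le_of_lt ht1)
      have : N₂ ≤ m + 1 := le_trans (le_max_right _ _) hn
      exact this
    have hw : 1 + δ ≤ ‖z ^ (m + 1) + c‖ := by
      have h5 : ‖c‖ - ‖z ^ (m + 1)‖ ≤ ‖z ^ (m + 1) + c‖ := by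
        have h6 : ‖c‖ ≤ ‖z ^ (m + 1) + c‖ + ‖z ^ (m + 1)‖ := by
          rw [show c = (z ^ (m + 1) + c) + (-(z ^ (m + 1))) by ring]
          simpa using norm_add_le (z ^ (m + 1) + c) (-(z ^ (m + 1)))
        linarith
      rw [norm_pow] at h5
      nlinarith
    have hmem : z ^ (m + 1) + c ∉ filledJulia (fun w => w ^ (m + 1) + c) :=
      hesc _ hw
    apply hmem
    set f : ℂ → ℂ := fun w => w ^ (m + 1) + c with hf
    have hsub : (Set.range fun k : ℕ => f^[k] (f z)) ⊆ Set.range fun k : ℕ => f^[k] z := by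
      rintro _ ⟨k, rfl⟩
      exact ⟨k + 1, (Function.iterate_succ_apply f k z).symm⟩
    exact Bornology.IsBounded.subset
      (show Bornology.IsBounded (Set.range fun k : ℕ => f^[k] z) from hz) hsub
  · -- upper bound
    by_contra h
    push_neg at h
    exact hesc z (by linarith) hz
end

section
/- Let (c_n) be a sequence in ℂ with |c_n| → ∞ and (1/n)·log|c_n| → 0, and set p_n(z) = z^{n-1}(z - c_n) for n ≥ 2. Then: (a) (1/n)·log(sup_{|z|=1}|p_n(z)|) → 0 as n → ∞; and (b) c_n belongs to the filled Julia set K_{p_n} for every n (since p_n(c_n) = 0 and 0 is a fixed point of p_n), so the filled Julia sets K_{p_n} are not uniformly bounded. -/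
open Filter

theorem mem_filledJulia_of_isFixedPt_apply {f : ℂ → ℂ} {z : ℂ}
    (h : Function.IsFixedPt f (f z)) : z ∈ filledJulia f := by
  have horbit : (Set.range fun k : ℕ => f^[k] z) ⊆ {z, f z} := by
    rintro _ ⟨_ | k, rfl⟩
    · exact Set.mem_insert z _
    · show f^[k + 1] z ∈ _
      rw [Function.iterate_succ_apply, Function.iterate_fixed h]
      exact Set.mem_insert_of_mem z rfl
  exact ((Set.toFinite _).isBounded).subset horbit

theorem mem_filledJulia_pow_mul_sub {m : ℕ} (hm : m ≠ 0) (c : ℂ) :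
    c ∈ filledJulia (fun z => z ^ m * (z - c)) :=
  mem_filledJulia_of_isFixedPt_apply (by simp [Function.IsFixedPt, hm])

theorem iSup_sphere_norm_pow_mul_sub (m : ℕ) (c : ℂ) :
    (⨆ z : Metric.sphere (0 : ℂ) 1, ‖(z : ℂ) ^ m * ((z : ℂ) - c)‖) = 1 + ‖c‖ := by
  -- the maximum is attained at the unit vector pointing away from `c`
  set w : ℂ := -Complex.exp (Complex.arg c * Complex.I)
  have hw : ‖w‖ = 1 := by simp [w, Complex.norm_exp_ofReal_mul_I]
  have hc : c = -‖c‖ * w := by simp [w, Complex.norm_mul_exp_arg_mul_I]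
  refine IsGreatest.csSup_eq ⟨⟨⟨w, by simpa using hw⟩, ?_⟩, ?_⟩
  · simp only [norm_mul, norm_pow, hw, one_pow, one_mul]
    rw [show w - c = (1 + ‖c‖) * w by linear_combination -hc, norm_mul, hw, mul_one]
    norm_cast
    exact Real.norm_of_nonneg (by positivity)
  · rintro _ ⟨z, rfl⟩
    have hz : ‖(z : ℂ)‖ = 1 := by simp
    simp only [norm_mul, norm_pow, hz, one_pow, one_mul]
    exact (norm_sub_le _ _).trans_eq (by rw [hz])

theorem tendsto_div_mul_log_one_add {a : ℕ → ℝ} (ha : Tendsto a atTop atTop)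
    (hlog : Tendsto (fun n : ℕ => (1 / n : ℝ) * Real.log (a n)) atTop (nhds 0)) :
    Tendsto (fun n : ℕ => (1 / n : ℝ) * Real.log (1 + a n)) atTop (nhds 0) := by
  -- for `x ≥ 1`, `log x ≤ log (1 + x) ≤ log 2 + log x`, and `(1 / n) * log 2 → 0`
  have hupper : Tendsto (fun n : ℕ => (1 / n : ℝ) * Real.log 2 + (1 / n : ℝ) * Real.log (a n))
      atTop (nhds 0) := by
    simpa using (tendsto_one_div_atTop_nhds_zero_nat.mul_const (Real.log 2)).add hlog
  refine tendsto_of_tendsto_of_tendsto_of_le_of_le' hlog hupper ?_ ?_ <;>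
    filter_upwards [ha.eventually_ge_atTop 1] with n hn
  · gcongr
    linarith
  · rw [← mul_add, ← Real.log_mul two_ne_zero (by linarith)]
    gcongr
    linarith

theorem statement10 (c : ℕ → ℂ)
    (hinf : Tendsto (fun n => ‖c n‖) atTop atTop)
    (hlog : Tendsto (fun n : ℕ => (1 / n : ℝ) * Real.log ‖c n‖) atTop (nhds 0)) :
    Tendsto (fun n : ℕ =>
        (1 / n : ℝ) * Real.log (⨆ z : Metric.sphere (0 : ℂ) 1,
          ‖(z : ℂ) ^ (n - 1) * ((z : ℂ) - c n)‖)) atTop (nhds 0) ∧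
    (∀ n : ℕ, 2 ≤ n → c n ∈ filledJulia (fun z => z ^ (n - 1) * (z - c n))) ∧
    ¬ ∃ R : ℝ, ∀ n : ℕ, 2 ≤ n →
        filledJulia (fun z => z ^ (n - 1) * (z - c n)) ⊆
          Metric.closedBall (0 : ℂ) R := by
  have hjulia (n : ℕ) (hn : 2 ≤ n) : c n ∈ filledJulia (fun z => z ^ (n - 1) * (z - c n)) :=
    mem_filledJulia_pow_mul_sub (by omega) (c n)
  refine ⟨?_, hjulia, ?_⟩
  · simpa only [iSup_sphere_norm_pow_mul_sub] using tendsto_div_mul_log_one_add hinf hlog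
  · rintro ⟨R, hR⟩
    obtain ⟨n, hnR, hn⟩ := ((hinf.eventually_gt_atTop R).and (eventually_ge_atTop 2)).exists
    have hcR := hR n hn (hjulia n hn)
    rw [Metric.mem_closedBall, dist_zero_right] at hcR
    linarith
end

section
/- Let c ∈ ℂ with |c| < 1, ε > 0. Then there exists N such that for all n ≥ N the filled Julia set of p_n(z) = z^n + c contains the closed disk closure(D(0, 1-ε)) and is contained in D(0, 1+ε); consequently the filled Julia sets of z^n + c converge to the closed unit disk in the Hausdorff metric as n → ∞. -/
open Filter

lemma aux_infDist (x : ℂ) (r δ : ℝ) (hr : 0 ≤ r) (hδ : 0 ≤ δ) (hx : ‖x‖ ≤ r + δ) :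
    Metric.infDist x (Metric.closedBall (0:ℂ) r) ≤ δ := by
  rcases le_or_gt ‖x‖ r with h | h
  · rw [Metric.infDist_zero_of_mem (by simpa [Metric.mem_closedBall, dist_zero_right] using h)]
    exact hδ
  · have hx0 : x ≠ 0 := by intro h0; simp [h0] at h; linarith
    have hnx : (0:ℝ) < ‖x‖ := norm_pos_iff.2 hx0
    have hy : (r / ‖x‖) • x ∈ Metric.closedBall (0:ℂ) r := by
      have : ‖(r / ‖x‖) • x‖ = r := by
        rw [norm_smul, Real.norm_eq_abs, abs_of_nonneg (div_nonneg hr hnx.le),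
          div_mul_cancel₀ _ hnx.ne']
      rw [Metric.mem_closedBall, dist_zero_right, this]
    calc Metric.infDist x (Metric.closedBall (0:ℂ) r) ≤ dist x ((r / ‖x‖) • x) :=
          Metric.infDist_le_dist_of_mem hy
      _ = ‖x‖ - r := by
          rw [dist_eq_norm]
          have : x - (r / ‖x‖) • x = (1 - r / ‖x‖) • x := by module
          rw [this, norm_smul]
          have h1 : (0:ℝ) ≤ 1 - r / ‖x‖ := by
            rw [sub_nonneg, div_le_one hnx]; exact h.le
          rw [Real.norm_eq_abs, abs_of_nonneg h1, sub_mul, one_mul,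
            div_mul_cancel₀ _ hnx.ne']
      _ ≤ δ := by linarith

/-- If the ball of radius `R` is invariant, all its points are in the filled Julia set. -/
lemma aux_mem (c : ℂ) (n : ℕ) (R : ℝ) (hR : R ^ n + ‖c‖ ≤ R) (z : ℂ) (hz : ‖z‖ ≤ R) :
    z ∈ filledJulia (fun z => z ^ n + c) := by
  set f : ℂ → ℂ := fun z => z ^ n + c with hf
  have key : ∀ k : ℕ, ‖f^[k] z‖ ≤ R := by
    intro k
    induction k with
    | zero => simpa using hz
    | succ k ih =>
      rw [Function.iterate_succ_apply']
      calc ‖f (f^[k] z)‖ = ‖(f^[k] z) ^ n + c‖ := rfl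
        _ ≤ ‖(f^[k] z) ^ n‖ + ‖c‖ := norm_add_le _ _
        _ = ‖f^[k] z‖ ^ n + ‖c‖ := by rw [norm_pow]
        _ ≤ R ^ n + ‖c‖ := by gcongr
        _ ≤ R := hR
  refine Metric.isBounded_closedBall (x := (0:ℂ)) (r := R) |>.subset ?_
  rintro _ ⟨k, rfl⟩
  simpa [Metric.mem_closedBall, dist_zero_right] using key k

/-- Escape lemma: points of norm ≥ 1 + ε escape to infinity. -/
lemma aux_escape (c : ℂ) (hc : ‖c‖ < 1) (ε : ℝ) (hε : 0 < ε) (n : ℕ) (hn : 1 ≤ n)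
    (hpow : 3 ≤ (1 + ε) ^ (n - 1)) (z : ℂ) (hz : 1 + ε ≤ ‖z‖) :
    z ∉ filledJulia (fun z => z ^ n + c) := by
  set f : ℂ → ℂ := fun z => z ^ n + c with hf
  have key : ∀ k : ℕ, 2 ^ k * ‖z‖ ≤ ‖f^[k] z‖ := by
    intro k
    induction k with
    | zero => simp
    | succ k ih =>
      have hwz : 1 + ε ≤ ‖f^[k] z‖ := by
        calc 1 + ε ≤ ‖z‖ := hz
          _ ≤ 2 ^ k * ‖z‖ := by
              nlinarith [norm_nonneg z, one_le_pow₀ (a := (2:ℝ)) (n := k) one_le_two]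
          _ ≤ ‖f^[k] z‖ := ih
      set w := f^[k] z with hw
      have hw1 : (1:ℝ) ≤ ‖w‖ := by linarith
      have hstep : 2 * ‖w‖ ≤ ‖f w‖ := by
        have h1 : ‖w‖ ^ n = ‖w‖ * ‖w‖ ^ (n - 1) := by
          conv_lhs => rw [← Nat.succ_pred_eq_of_pos hn]
          rw [pow_succ', Nat.pred_eq_sub_one]
        have h2 : (1 + ε) ^ (n - 1) ≤ ‖w‖ ^ (n - 1) := by
          gcongr
        have h3 : ‖w‖ * 3 ≤ ‖w‖ ^ n := by
          rw [h1]
          nlinarith [h2, hε]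
        have h4 : ‖w‖ ^ n - ‖c‖ ≤ ‖w ^ n + c‖ := by
          calc ‖w‖ ^ n - ‖c‖ = ‖w ^ n‖ - ‖c‖ := by rw [norm_pow]
            _ ≤ ‖w ^ n + c‖ := by
                have := norm_add_le (w ^ n + c) (-c)
                simp only [add_neg_cancel_right, norm_neg] at this
                linarith
        have : ‖f w‖ = ‖w ^ n + c‖ := rfl
        rw [this]
        nlinarith
      calc 2 ^ (k + 1) * ‖z‖ = 2 * (2 ^ k * ‖z‖) := by ring
        _ ≤ 2 * ‖w‖ := by nlinarith [norm_nonneg z]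
        _ ≤ ‖f w‖ := hstep
        _ = ‖f^[k + 1] z‖ := by rw [Function.iterate_succ_apply']
  intro hmem
  rw [filledJulia, Set.mem_setOf_eq, isBounded_iff_forall_norm_le] at hmem
  obtain ⟨C, hC⟩ := hmem
  have hz0 : 0 < ‖z‖ := by linarith
  obtain ⟨k, hk⟩ := pow_unbounded_of_one_lt (C / ‖z‖) (y := (2:ℝ)) one_lt_two
  have h1 : C < 2 ^ k * ‖z‖ := by
    rw [div_lt_iff₀ hz0] at hk; linarith
  have h2 : ‖f^[k] z‖ ≤ C := hC _ ⟨k, rfl⟩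
  linarith [key k]

theorem statement17 (c : ℂ) (hc : ‖c‖ < 1) :
    (∀ ε : ℝ, 0 < ε → ∃ N : ℕ, ∀ n ≥ N,
      Metric.closedBall (0 : ℂ) (1 - ε) ⊆ filledJulia (fun z => z ^ n + c) ∧
      filledJulia (fun z => z ^ n + c) ⊆ Metric.ball (0 : ℂ) (1 + ε)) ∧
    Tendsto (fun n : ℕ =>
        Metric.hausdorffDist (filledJulia (fun z => z ^ n + c))
          (Metric.closedBall (0 : ℂ) 1)) atTop (nhds 0) := by
  have hc0 : (0:ℝ) ≤ ‖c‖ := norm_nonneg c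
  have part1 : ∀ ε : ℝ, 0 < ε → ∃ N : ℕ, ∀ n ≥ N,
      Metric.closedBall (0 : ℂ) (1 - ε) ⊆ filledJulia (fun z => z ^ n + c) ∧
      filledJulia (fun z => z ^ n + c) ⊆ Metric.ball (0 : ℂ) (1 + ε) := by
    intro ε hε
    set R : ℝ := max (1 - ε) ((1 + ‖c‖) / 2) with hRdef
    have hRc : ‖c‖ < R := lt_of_lt_of_le (by linarith) (le_max_right _ _)
    have hR1 : R < 1 := max_lt (by linarith) (by linarith)
    have hR0 : (0:ℝ) ≤ R := le_trans (by linarith) (le_max_right _ _)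
    have htend1 : Tendsto (fun n : ℕ => R ^ n) atTop (nhds 0) :=
      tendsto_pow_atTop_nhds_zero_of_lt_one hR0 hR1
    have hev1 : ∀ᶠ n in atTop, R ^ n < R - ‖c‖ :=
      htend1.eventually (gt_mem_nhds (by linarith))
    obtain ⟨N₁, hN₁⟩ := eventually_atTop.1 hev1
    have htend2 : Tendsto (fun m : ℕ => (1 + ε) ^ m) atTop atTop :=
      tendsto_pow_atTop_atTop_of_one_lt (by linarith)
    obtain ⟨N₂, hN₂⟩ := eventually_atTop.1 (htend2.eventually_ge_atTop 3)
    refine ⟨max N₁ (N₂ + 1), fun n hn => ?_⟩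
    have hnN₁ : N₁ ≤ n := le_trans (le_max_left _ _) hn
    have hnN₂ : N₂ + 1 ≤ n := le_trans (le_max_right _ _) hn
    have hn1 : 1 ≤ n := le_trans (Nat.le_add_left 1 N₂) hnN₂
    have hinv : R ^ n + ‖c‖ ≤ R := by linarith [hN₁ n hnN₁]
    constructor
    · intro z hz
      rw [Metric.mem_closedBall, dist_zero_right] at hz
      exact aux_mem c n R hinv z (hz.trans (le_max_left _ _))
    · intro z hzJ
      rw [Metric.mem_ball, dist_zero_right]
      by_contra hge
      push_neg at hge
      exact aux_escape c hc ε hε n hn1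
        (hN₂ (n - 1) (by omega)) z hge hzJ
  refine ⟨part1, ?_⟩
  rw [Metric.tendsto_atTop]
  intro ε hε
  set δ : ℝ := min (ε / 2) 2⁻¹ with hδdef
  have hδ0 : (0:ℝ) < δ := lt_min (by linarith) (by norm_num)
  have hδε : δ < ε := lt_of_le_of_lt (min_le_left _ _) (by linarith)
  have hδ1 : δ ≤ 2⁻¹ := min_le_right _ _
  obtain ⟨N, hN⟩ := part1 δ hδ0
  refine ⟨N, fun n hn => ?_⟩
  obtain ⟨h1, h2⟩ := hN n hn
  have hball_ne : (Metric.closedBall (0:ℂ) (1 - δ)).Nonempty :=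
    ⟨0, by rw [Metric.mem_closedBall, dist_self]; norm_num at hδ1 ⊢; linarith⟩
  have hJne : (filledJulia (fun z => z ^ n + c)).Nonempty := hball_ne.mono h1
  have hHD : Metric.hausdorffDist (filledJulia (fun z => z ^ n + c))
      (Metric.closedBall (0:ℂ) 1) ≤ δ := by
    refine Metric.hausdorffDist_le_of_infDist hδ0.le ?_ ?_
    · intro x hx
      have hx' : ‖x‖ < 1 + δ := by
        have := h2 hx
        rwa [Metric.mem_ball, dist_zero_right] at this
      exact aux_infDist x 1 δ zero_le_one hδ0.le (by linarith)
    · intro y hy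
      rw [Metric.mem_closedBall, dist_zero_right] at hy
      calc Metric.infDist y (filledJulia (fun z => z ^ n + c))
          ≤ Metric.infDist y (Metric.closedBall (0:ℂ) (1 - δ)) :=
            Metric.infDist_le_infDist_of_subset h1 hball_ne
        _ ≤ δ := aux_infDist y (1 - δ) δ (by norm_num at hδ1 ⊢; linarith) hδ0.le
            (by linarith)
  have hnn : 0 ≤ Metric.hausdorffDist (filledJulia (fun z => z ^ n + c))
      (Metric.closedBall (0:ℂ) 1) := Metric.hausdorffDist_nonneg
  rw [Real.dist_eq, sub_zero, abs_of_nonneg hnn]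
  linarith
end
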